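/- arXiv:2605.28007 — 8 statements merged into one kernel-verified Lean document; each statement's English description precedes it below -/
import Mathlib

section
/- Let Φ ∈ ℝ^{m×K} (K ≥ 2) be a matrix with unit Euclidean-norm columns and mutual coherence μ(Φ) > 0, and let g₀ ∈ ℝ^K satisfy ‖g₀‖₀ < (1/2)·(1 + 1/μ(Φ)). Then every z ∈ ℝ^K with z ≠ g₀ and Φz = Φg₀ satisfies ‖z‖₀ > ‖g₀‖₀; that is, g₀ is the unique sparsest representation of Φg₀ in the dictionary Φ. -/
open Matrix
open scoped Classical

/-- Mutual coherence of a matrix: the largest normalized absolute inner product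
between two distinct columns. -/
noncomputable def mutualCoherence {m K : ℕ} (Φ : Matrix (Fin m) (Fin K) ℝ) : ℝ :=
  sSup {r : ℝ | ∃ i j : Fin K, i ≠ j ∧
    r = |Φᵀ i ⬝ᵥ Φᵀ j| / (Real.sqrt (Φᵀ i ⬝ᵥ Φᵀ i) * Real.sqrt (Φᵀ j ⬝ᵥ Φᵀ j))}

/-- ℓ0 "norm": the number of nonzero entries of a vector. -/
noncomputable def l0norm {K : ℕ} (g : Fin K → ℝ) : ℕ :=
  (Finset.univ.filter fun i => g i ≠ 0).card

/-- If the support size of `g₀` is below half of `1 + 1/μ(Φ)`, then `g₀` is the unique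
sparsest representation of `Φ g₀`. -/
theorem unique_sparsest_representation {m K : ℕ} (hK : 2 ≤ K)
    (Φ : Matrix (Fin m) (Fin K) ℝ)
    (hunit : ∀ i : Fin K, Real.sqrt (Φᵀ i ⬝ᵥ Φᵀ i) = 1)
    (hμ : 0 < mutualCoherence Φ)
    (g₀ : Fin K → ℝ)
    (hsparse : (l0norm g₀ : ℝ) < (1 / 2) * (1 + 1 / mutualCoherence Φ)) :
    ∀ z : Fin K → ℝ, z ≠ g₀ → Φ.mulVec z = Φ.mulVec g₀ → l0norm g₀ < l0norm z := by
  intro z hz hΦz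
  set μ := mutualCoherence Φ with hμdef
  -- unit norms: Φᵀ i ⬝ᵥ Φᵀ i = 1
  have hdiag : ∀ i : Fin K, Φᵀ i ⬝ᵥ Φᵀ i = 1 := by
    intro i
    have hnn : 0 ≤ Φᵀ i ⬝ᵥ Φᵀ i :=
      Finset.sum_nonneg fun k _ => mul_self_nonneg _
    have := hunit i
    nlinarith [Real.sq_sqrt hnn, this]
  -- coherence bounds every off-diagonal inner product
  have hbdd : BddAbove {r : ℝ | ∃ i j : Fin K, i ≠ j ∧
      r = |Φᵀ i ⬝ᵥ Φᵀ j| / (Real.sqrt (Φᵀ i ⬝ᵥ Φᵀ i) * Real.sqrt (Φᵀ j ⬝ᵥ Φᵀ j))} := by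
    apply Set.Finite.bddAbove
    apply Set.Finite.subset (Set.finite_range (fun p : Fin K × Fin K =>
      |Φᵀ p.1 ⬝ᵥ Φᵀ p.2| / (Real.sqrt (Φᵀ p.1 ⬝ᵥ Φᵀ p.1) * Real.sqrt (Φᵀ p.2 ⬝ᵥ Φᵀ p.2))))
    rintro r ⟨i, j, _, rfl⟩
    exact ⟨(i, j), rfl⟩
  have hcoh : ∀ i j : Fin K, i ≠ j → |Φᵀ i ⬝ᵥ Φᵀ j| ≤ μ := by
    intro i j hij
    apply le_csSup hbdd
    exact ⟨i, j, hij, by rw [hunit i, hunit j, one_mul, div_one]⟩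
  -- the difference vector
  set h : Fin K → ℝ := z - g₀ with hh
  have hne : h ≠ 0 := sub_ne_zero.mpr hz
  have hker : Φ.mulVec h = 0 := by
    rw [hh]
    have : Φ.mulVec (z - g₀) = Φ.mulVec z - Φ.mulVec g₀ := by
      simp [Matrix.mulVec_sub]
    rw [this, hΦz, sub_self]
  -- Gram equation
  have key : ∀ i : Fin K, ∑ j : Fin K, (Φᵀ i ⬝ᵥ Φᵀ j) * h j = 0 := by
    intro i
    have h1 : Φᵀ i ⬝ᵥ Φ.mulVec h = 0 := by rw [hker]; simp
    rw [← h1]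
    simp only [dotProduct, Matrix.mulVec, Matrix.transpose_apply, Finset.sum_mul,
      Finset.mul_sum, mul_assoc]
    exact Finset.sum_comm
  -- choose index with maximal |h i|
  obtain ⟨i, _, hi⟩ := Finset.exists_max_image Finset.univ (fun j => |h j|)
    ⟨⟨0, by omega⟩, Finset.mem_univ _⟩
  have hipos : 0 < |h i| := by
    obtain ⟨j, hj⟩ := Function.ne_iff.mp hne
    have : 0 < |h j| := abs_pos.mpr hj
    exact lt_of_lt_of_le this (hi j (Finset.mem_univ _))
  set S : Finset (Fin K) := Finset.univ.filter fun j => h j ≠ 0 with hS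
  have hiS : i ∈ S := by
    simp only [hS, Finset.mem_filter, Finset.mem_univ, true_and]
    exact fun h0 => by simp [h0] at hipos
  -- main estimate
  have hmain : |h i| ≤ (S.card - 1 : ℝ) * μ * |h i| := by
    have hsplit := key i
    rw [← Finset.add_sum_erase Finset.univ _ (Finset.mem_univ i)] at hsplit
    rw [hdiag i, one_mul] at hsplit
    have heq : h i = -∑ j ∈ Finset.univ.erase i, (Φᵀ i ⬝ᵥ Φᵀ j) * h j := by linarith
    calc |h i| = |∑ j ∈ Finset.univ.erase i, (Φᵀ i ⬝ᵥ Φᵀ j) * h j| := by rw [heq, abs_neg]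
      _ ≤ ∑ j ∈ Finset.univ.erase i, |(Φᵀ i ⬝ᵥ Φᵀ j) * h j| := Finset.abs_sum_le_sum_abs _ _
      _ = ∑ j ∈ S.erase i, |(Φᵀ i ⬝ᵥ Φᵀ j) * h j| := by
          refine (Finset.sum_subset ?_ ?_).symm
          · intro j hj
            simp only [hS, Finset.mem_erase, Finset.mem_filter, Finset.mem_univ, true_and] at hj ⊢
            exact ⟨hj.1, trivial⟩
          · intro j hj hj'
            simp only [hS, Finset.mem_erase, Finset.mem_filter, Finset.mem_univ, true_and,
              not_and, not_not] at hj hj'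
            rw [hj' hj.1, mul_zero, abs_zero]
      _ ≤ ∑ j ∈ S.erase i, μ * |h i| := by
          apply Finset.sum_le_sum
          intro j hj
          have hjne : j ≠ i := (Finset.mem_erase.mp hj).1
          rw [abs_mul]
          have h1 : |Φᵀ i ⬝ᵥ Φᵀ j| ≤ μ := hcoh i j (Ne.symm hjne)
          have h2 : |h j| ≤ |h i| := hi j (Finset.mem_univ _)
          exact mul_le_mul h1 h2 (abs_nonneg _) (le_of_lt hμ)
      _ = (S.erase i).card * (μ * |h i|) := by rw [Finset.sum_const, nsmul_eq_mul]
      _ = (S.card - 1 : ℝ) * μ * |h i| := by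
          rw [Finset.card_erase_of_mem hiS]
          have h1 : 1 ≤ S.card := Finset.card_pos.mpr ⟨i, hiS⟩
          rw [Nat.cast_sub h1]
          ring
  -- deduce spark bound
  have hspark : 1 + 1 / μ ≤ (S.card : ℝ) := by
    have h1 : 1 ≤ (S.card - 1 : ℝ) * μ := by
      by_contra hc
      push_neg at hc
      nlinarith
    have h2 : 1 / μ ≤ (S.card : ℝ) - 1 := by
      rw [div_le_iff₀ hμ]; linarith
    linarith
  -- subadditivity of l0
  have hsub : (S.card : ℕ) ≤ l0norm z + l0norm g₀ := by
    have : S ⊆ (Finset.univ.filter fun j => z j ≠ 0) ∪ (Finset.univ.filter fun j => g₀ j ≠ 0) := by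
      intro j hj
      simp only [hS, Finset.mem_filter, Finset.mem_univ, true_and] at hj
      simp only [Finset.mem_union, Finset.mem_filter, Finset.mem_univ, true_and]
      by_contra hc
      push_neg at hc
      apply hj
      simp [hh, hc.1, hc.2]
    calc S.card ≤ _ := Finset.card_le_card this
      _ ≤ _ := Finset.card_union_le _ _
  -- finish
  have hz0 : (l0norm g₀ : ℝ) < (l0norm z : ℝ) := by
    have h1 : (S.card : ℝ) ≤ (l0norm z : ℝ) + (l0norm g₀ : ℝ) := by
      exact_mod_cast hsub
    nlinarith
  exact_mod_cast hz0
end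

section
/- Let Φ ∈ ℝ^{m×K} (K ≥ 2) be a matrix with unit Euclidean-norm columns and mutual coherence μ(Φ) > 0, and let g₀ ∈ ℝ^K satisfy ‖g₀‖₀ < (1/2)·(1 + 1/μ(Φ)). Then g₀ is the unique minimizer of the ℓ1 norm over the affine feasible set: for every z ∈ ℝ^K with Φz = Φg₀ and z ≠ g₀, one has ‖z‖₁ > ‖g₀‖₁. In particular, basis-pursuit (ℓ1-minimization subject to exact reconstruction) recovers the true sparse code g₀. -/
open Matrix
open scoped Classical

/-- Exact recovery by basis pursuit: under the coherence-based sparsity bound, `g₀` is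
the unique ℓ1-minimizer over the affine feasible set `{z : Φ z = Φ g₀}`. -/
theorem basis_pursuit_exact_recovery {m K : ℕ} (hK : 2 ≤ K)
    (Φ : Matrix (Fin m) (Fin K) ℝ)
    (hunit : ∀ i : Fin K, Real.sqrt (Φᵀ i ⬝ᵥ Φᵀ i) = 1)
    (hμ : 0 < mutualCoherence Φ)
    (g₀ : Fin K → ℝ)
    (hsparse : (l0norm g₀ : ℝ) < (1 / 2) * (1 + 1 / mutualCoherence Φ)) :
    ∀ z : Fin K → ℝ, Φ.mulVec z = Φ.mulVec g₀ → z ≠ g₀ →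
      (∑ i, |g₀ i|) < ∑ i, |z i| := by
  intro z hz hne
  set μ := mutualCoherence Φ with hμdef
  -- diagonal Gram entries are 1
  have hdiag : ∀ i : Fin K, Φᵀ i ⬝ᵥ Φᵀ i = 1 := by
    intro i
    have h0 : 0 ≤ Φᵀ i ⬝ᵥ Φᵀ i :=
      Finset.sum_nonneg fun j _ => mul_self_nonneg _
    have := Real.sq_sqrt h0
    rw [hunit i] at this
    nlinarith
  -- off-diagonal Gram entries bounded by μ
  have hCS : ∀ i j : Fin K, |Φᵀ i ⬝ᵥ Φᵀ j| ≤ 1 := by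
    intro i j
    have h2 := Finset.sum_mul_sq_le_sq_mul_sq Finset.univ (fun x => Φᵀ i x) (fun x => Φᵀ j x)
    have e1 : (∑ x, Φᵀ i x ^ 2) = Φᵀ i ⬝ᵥ Φᵀ i := by
      simp [dotProduct, sq]
    have e2 : (∑ x, Φᵀ j x ^ 2) = Φᵀ j ⬝ᵥ Φᵀ j := by
      simp [dotProduct, sq]
    rw [e1, e2, hdiag i, hdiag j] at h2
    have : (Φᵀ i ⬝ᵥ Φᵀ j) ^ 2 ≤ 1 := by
      simpa [dotProduct] using h2
    nlinarith [abs_nonneg (Φᵀ i ⬝ᵥ Φᵀ j), sq_abs (Φᵀ i ⬝ᵥ Φᵀ j)]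
  have hoff : ∀ i j : Fin K, i ≠ j → |Φᵀ i ⬝ᵥ Φᵀ j| ≤ μ := by
    intro i j hij
    apply le_csSup
    · refine ⟨1, ?_⟩
      rintro r ⟨a, b, hab, rfl⟩
      rw [hunit a, hunit b, one_mul, div_one]
      exact hCS a b
    · exact ⟨i, j, hij, by rw [hunit i, hunit j, one_mul, div_one]⟩
  -- the difference vector
  set h : Fin K → ℝ := z - g₀ with hhdef
  have hΦh : Φ.mulVec h = 0 := by
    rw [hhdef, Matrix.mulVec_sub, hz, sub_self]
  have hh0 : h ≠ 0 := sub_ne_zero.mpr hne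
  set T : ℝ := ∑ j, |h j| with hTdef
  have hTpos : 0 < T := by
    obtain ⟨i, hi⟩ := Function.ne_iff.mp hh0
    have : 0 < |h i| := abs_pos.mpr (by simpa using hi)
    have hle : |h i| ≤ T := Finset.single_le_sum (f := fun j => |h j|)
      (fun j _ => abs_nonneg _) (Finset.mem_univ i)
    linarith
  -- key per-coordinate bound
  have key : ∀ i : Fin K, (1 + μ) * |h i| ≤ μ * T := by
    intro i
    have h1 : (∑ j, (Φᵀ i ⬝ᵥ Φᵀ j) * h j) = 0 := by
      have h0 : Φᵀ i ⬝ᵥ Φ.mulVec h = 0 := by rw [hΦh]; simp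
      simp only [dotProduct, Matrix.mulVec, Matrix.transpose_apply] at h0 ⊢
      calc ∑ j, (∑ x, Φ x i * Φ x j) * h j
          = ∑ j, ∑ x, Φ x i * Φ x j * h j := by
            refine Finset.sum_congr rfl fun j _ => ?_
            rw [Finset.sum_mul]
        _ = ∑ x, ∑ j, Φ x i * Φ x j * h j := Finset.sum_comm
        _ = ∑ x, Φ x i * ∑ j, Φ x j * h j := by
            refine Finset.sum_congr rfl fun x _ => ?_
            rw [Finset.mul_sum]
            exact Finset.sum_congr rfl fun j _ => by ring
        _ = 0 := h0
    have h2 : h i = -∑ j ∈ Finset.univ.erase i, (Φᵀ i ⬝ᵥ Φᵀ j) * h j := by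
      have e : (Φᵀ i ⬝ᵥ Φᵀ i) * h i + ∑ j ∈ Finset.univ.erase i, (Φᵀ i ⬝ᵥ Φᵀ j) * h j
          = ∑ j, (Φᵀ i ⬝ᵥ Φᵀ j) * h j :=
        Finset.add_sum_erase Finset.univ (fun j => (Φᵀ i ⬝ᵥ Φᵀ j) * h j) (Finset.mem_univ i)
      rw [hdiag i, one_mul, h1] at e
      linarith
    have h3 : |h i| ≤ μ * ∑ j ∈ Finset.univ.erase i, |h j| := by
      rw [h2, abs_neg]
      calc |∑ j ∈ Finset.univ.erase i, (Φᵀ i ⬝ᵥ Φᵀ j) * h j|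
          ≤ ∑ j ∈ Finset.univ.erase i, |(Φᵀ i ⬝ᵥ Φᵀ j) * h j| :=
            Finset.abs_sum_le_sum_abs _ _
        _ ≤ ∑ j ∈ Finset.univ.erase i, μ * |h j| := by
            refine Finset.sum_le_sum fun j hj => ?_
            rw [abs_mul]
            exact mul_le_mul_of_nonneg_right
              (hoff i j (fun e => (Finset.mem_erase.mp hj).1 e.symm)) (abs_nonneg _)
        _ = μ * ∑ j ∈ Finset.univ.erase i, |h j| := by rw [Finset.mul_sum]
    have h4 : (∑ j ∈ Finset.univ.erase i, |h j|) = T - |h i| := by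
      rw [hTdef, ← Finset.add_sum_erase Finset.univ (fun j => |h j|) (Finset.mem_univ i)]
      ring
    rw [h4] at h3
    nlinarith
  -- support
  set S : Finset (Fin K) := Finset.univ.filter fun i => g₀ i ≠ 0 with hSdef
  have hScard : ((S.card : ℝ)) < (1 / 2) * (1 + 1 / μ) := hsparse
  have hSsum : (∑ i ∈ S, |h i|) < T / 2 := by
    have hbound : ∀ i : Fin K, |h i| ≤ μ / (1 + μ) * T := by
      intro i
      have := key i
      rw [div_mul_eq_mul_div, le_div_iff₀ (by linarith)]
      linarith
    calc (∑ i ∈ S, |h i|) ≤ ∑ i ∈ S, μ / (1 + μ) * T :=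
          Finset.sum_le_sum fun i _ => hbound i
      _ = (S.card : ℝ) * (μ / (1 + μ) * T) := by
          rw [Finset.sum_const, nsmul_eq_mul]
      _ < (1 / 2) * (1 + 1 / μ) * (μ / (1 + μ) * T) := by
          apply mul_lt_mul_of_pos_right hScard
          have : 0 < μ / (1 + μ) := div_pos hμ (by linarith)
          positivity
      _ = T / 2 := by
          field_simp
          ring
  -- finish
  have hzh : ∀ i, z i = g₀ i + h i := by intro i; simp [hhdef]
  have hfinal : (∑ i, |z i|) ≥ (∑ i, |g₀ i|) - (∑ i ∈ S, |h i|) + ∑ i ∈ Sᶜ, |h i| := by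
    have hsplit : (∑ i, |z i|) = (∑ i ∈ S, |z i|) + ∑ i ∈ Sᶜ, |z i| :=
      (Finset.sum_add_sum_compl S _).symm
    have hg₀split : (∑ i, |g₀ i|) = ∑ i ∈ S, |g₀ i| := by
      rw [← Finset.sum_add_sum_compl S fun i => |g₀ i|]
      have : (∑ i ∈ Sᶜ, |g₀ i|) = 0 := by
        apply Finset.sum_eq_zero
        intro i hi
        have : g₀ i = 0 := by
          by_contra hc
          exact (Finset.mem_compl.mp hi) (Finset.mem_filter.mpr ⟨Finset.mem_univ i, hc⟩)
        simp [this]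
      rw [this, add_zero]
    have h1 : (∑ i ∈ S, |z i|) ≥ (∑ i ∈ S, |g₀ i|) - ∑ i ∈ S, |h i| := by
      rw [← Finset.sum_sub_distrib]
      refine Finset.sum_le_sum fun i _ => ?_
      have := abs_add_le (g₀ i + h i) (-(h i))
      simp only [add_neg_cancel_right, abs_neg] at this
      rw [hzh i]
      linarith
    have h2 : (∑ i ∈ Sᶜ, |z i|) = ∑ i ∈ Sᶜ, |h i| := by
      refine Finset.sum_congr rfl fun i hi => ?_
      have hg : g₀ i = 0 := by
        by_contra hc
        exact (Finset.mem_compl.mp hi) (Finset.mem_filter.mpr ⟨Finset.mem_univ i, hc⟩)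
      rw [hzh i, hg, zero_add]
    rw [hsplit, h2, hg₀split]
    linarith
  have hcompl : (∑ i ∈ Sᶜ, |h i|) = T - ∑ i ∈ S, |h i| := by
    rw [hTdef, ← Finset.sum_add_sum_compl S fun j => |h j|]; ring
  rw [hcompl] at hfinal
  linarith
end

section
/- Let Φ ∈ ℝ^{m×K} (K ≥ 2) be a matrix with unit Euclidean-norm columns and mutual coherence μ(Φ) > 0. If T is a set of column indices with card(T) < 1 + 1/μ(Φ), then the columns {Φ_i : i ∈ T} are linearly independent. -/
open Matrix
open scoped Classical

lemma mutualCoherence_le_aux {m K : ℕ} (Φ : Matrix (Fin m) (Fin K) ℝ)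
    {i j : Fin K} (hij : i ≠ j) :
    |Φᵀ i ⬝ᵥ Φᵀ j| / (Real.sqrt (Φᵀ i ⬝ᵥ Φᵀ i) * Real.sqrt (Φᵀ j ⬝ᵥ Φᵀ j))
      ≤ mutualCoherence Φ := by
  apply le_csSup
  · apply Set.Finite.bddAbove
    apply Set.Finite.subset (Set.finite_range
      (fun p : Fin K × Fin K =>
        |Φᵀ p.1 ⬝ᵥ Φᵀ p.2| /
          (Real.sqrt (Φᵀ p.1 ⬝ᵥ Φᵀ p.1) * Real.sqrt (Φᵀ p.2 ⬝ᵥ Φᵀ p.2))))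
    rintro r ⟨a, b, _, rfl⟩
    exact ⟨(a, b), rfl⟩
  · exact ⟨i, j, hij, rfl⟩

/-- Spark lower bound: any set of fewer than `1 + 1/μ(Φ)` unit-norm columns of `Φ`
is linearly independent. -/
theorem coherence_spark_bound {m K : ℕ} (hK : 2 ≤ K)
    (Φ : Matrix (Fin m) (Fin K) ℝ)
    (hunit : ∀ i : Fin K, Real.sqrt (Φᵀ i ⬝ᵥ Φᵀ i) = 1)
    (hμ : 0 < mutualCoherence Φ)
    (T : Finset (Fin K))
    (hcard : (T.card : ℝ) < 1 + 1 / mutualCoherence Φ) :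
    LinearIndependent ℝ (fun i : T => Φᵀ (i : Fin K)) := by
  set μ := mutualCoherence Φ with hμdef
  have hdot : ∀ i : Fin K, Φᵀ i ⬝ᵥ Φᵀ i = 1 := by
    intro i
    have h := hunit i
    rw [Real.sqrt_eq_one] at h
    exact h
  have hbdd : ∀ i j : Fin K, i ≠ j → |Φᵀ i ⬝ᵥ Φᵀ j| ≤ μ := by
    intro i j hij
    have := mutualCoherence_le_aux Φ hij
    simpa [hunit i, hunit j] using this
  rw [Fintype.linearIndependent_iff]
  intro g hg
  by_contra h
  push_neg at h
  obtain ⟨i₁, hi₁⟩ := h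
  have hne : (Finset.univ : Finset T).Nonempty := ⟨i₁, Finset.mem_univ _⟩
  obtain ⟨i₀, -, hmax⟩ := Finset.exists_max_image Finset.univ (fun i => |g i|) hne
  have hgpos : 0 < |g i₀| :=
    lt_of_lt_of_le (abs_pos.mpr hi₁) (hmax i₁ (Finset.mem_univ _))
  -- dot the relation with column i₀
  have h0 : ∑ i : T, g i * (Φᵀ (i₀ : Fin K) ⬝ᵥ Φᵀ (i : Fin K)) = 0 := by
    have h1 : Φᵀ (i₀ : Fin K) ⬝ᵥ (∑ i : T, g i • Φᵀ (i : Fin K)) = 0 := by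
      rw [hg, dotProduct_zero]
    rw [show (∑ i : T, g i * (Φᵀ (i₀ : Fin K) ⬝ᵥ Φᵀ (i : Fin K)))
        = Φᵀ (i₀ : Fin K) ⬝ᵥ (∑ i : T, g i • Φᵀ (i : Fin K)) from ?_, h1]
    simp only [dotProduct, Finset.sum_apply, Pi.smul_apply, smul_eq_mul, Finset.mul_sum]
    rw [Finset.sum_comm]
    congr 1; ext i; congr 1; ext x; ring
  have hsplit : g i₀ + ∑ i ∈ Finset.univ.erase i₀,
      g i * (Φᵀ (i₀ : Fin K) ⬝ᵥ Φᵀ (i : Fin K)) = 0 := by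
    have h2 := Finset.add_sum_erase Finset.univ
      (fun i : T => g i * (Φᵀ (i₀ : Fin K) ⬝ᵥ Φᵀ (i : Fin K))) (Finset.mem_univ i₀)
    rw [h2.symm] at h0
    simpa [hdot] using h0
  have hgi₀ : |g i₀| = |∑ i ∈ Finset.univ.erase i₀,
      g i * (Φᵀ (i₀ : Fin K) ⬝ᵥ Φᵀ (i : Fin K))| := by
    have : g i₀ = -∑ i ∈ Finset.univ.erase i₀,
        g i * (Φᵀ (i₀ : Fin K) ⬝ᵥ Φᵀ (i : Fin K)) := by linarith
    rw [this, abs_neg]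
  have hterm : ∀ i ∈ Finset.univ.erase i₀,
      |g i * (Φᵀ (i₀ : Fin K) ⬝ᵥ Φᵀ (i : Fin K))| ≤ |g i₀| * μ := by
    intro i hi
    have hine : i ≠ i₀ := Finset.ne_of_mem_erase hi
    have hcoe : (i₀ : Fin K) ≠ (i : Fin K) := by
      intro hc
      exact hine (Subtype.ext hc.symm)
    rw [abs_mul]
    exact mul_le_mul (hmax i (Finset.mem_univ _)) (hbdd _ _ hcoe) (abs_nonneg _)
      (abs_nonneg _)
  have hbound : |g i₀| ≤ ((Finset.univ.erase i₀).card : ℝ) * (|g i₀| * μ) := by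
    calc |g i₀| = |∑ i ∈ Finset.univ.erase i₀,
            g i * (Φᵀ (i₀ : Fin K) ⬝ᵥ Φᵀ (i : Fin K))| := hgi₀
      _
        ≤ ∑ i ∈ Finset.univ.erase i₀,
            |g i * (Φᵀ (i₀ : Fin K) ⬝ᵥ Φᵀ (i : Fin K))| := Finset.abs_sum_le_sum_abs _ _
      _ ≤ ∑ _i ∈ Finset.univ.erase i₀, |g i₀| * μ := Finset.sum_le_sum hterm
      _ = ((Finset.univ.erase i₀).card : ℝ) * (|g i₀| * μ) := by
            rw [Finset.sum_const, nsmul_eq_mul]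
  have hcardT : (Finset.univ : Finset T).card = T.card := by
    simp [Finset.card_univ]
  have hT1 : 1 ≤ T.card := by
    have : (i₁ : Fin K) ∈ T := i₁.2
    exact Finset.card_pos.mpr ⟨_, this⟩
  have hec : (((Finset.univ.erase i₀).card : ℝ)) = (T.card : ℝ) - 1 := by
    rw [Finset.card_erase_of_mem (Finset.mem_univ _), hcardT]
    push_cast [hT1]
    ring
  have hsmall : ((T.card : ℝ) - 1) * μ < 1 := by
    have h1 : (T.card : ℝ) - 1 < 1 / μ := by linarith
    calc ((T.card : ℝ) - 1) * μ < (1 / μ) * μ := by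
          apply mul_lt_mul_of_pos_right h1 hμ
      _ = 1 := by field_simp
  rw [hec] at hbound
  nlinarith [hgpos, hbound, hsmall]
end

section
/- Let S ∈ ℝ^{d×K}, U ∈ ℝ^{m×K}, x ∈ ℝ^d, h ∈ ℝ^m, λ ≥ 0, f(g) = (1/2)‖x − Sg‖₂² + (1/2)‖h − Ug‖₂², E(g) = f(g) + λ‖g‖₁, and L = ‖SᵀS + UᵀU‖_op, with L > 0. Define the ISTA iterates by g^{(t+1)} = soft(g^{(t)} − (1/L)·∇f(g^{(t)}), λ/L) from an arbitrary g^{(0)} ∈ ℝ^K, and suppose g* is a minimizer of E over ℝ^K. Then for every t ≥ 1, E(g^{(t)}) − E(g*) ≤ L·‖g^{(0)} − g*‖₂² / (2t); in particular the objective error converges to zero at rate O(1/t). -/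
open Matrix Finset
open scoped RealInnerProductSpace

/-- Smooth part of the layer energy:
`f(g) = ½‖x − Sg‖₂² + ½‖h − Ug‖₂²`. -/
noncomputable def smoothPart {d m K : ℕ} (S : Matrix (Fin d) (Fin K) ℝ)
    (U : Matrix (Fin m) (Fin K) ℝ) (x : Fin d → ℝ) (h : Fin m → ℝ)
    (g : Fin K → ℝ) : ℝ :=
  (1 / 2) * (∑ a, (x a - S.mulVec g a) ^ 2) + (1 / 2) * (∑ b, (h b - U.mulVec g b) ^ 2)

/-- Layer energy `E(g) = f(g) + λ‖g‖₁`. -/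
noncomputable def energy {d m K : ℕ} (S : Matrix (Fin d) (Fin K) ℝ)
    (U : Matrix (Fin m) (Fin K) ℝ) (x : Fin d → ℝ) (h : Fin m → ℝ) (lam : ℝ)
    (g : Fin K → ℝ) : ℝ :=
  smoothPart S U x h g + lam * ∑ i, |g i|

/-- Gradient of the smooth part: `∇f(g) = Sᵀ(Sg − x) + Uᵀ(Ug − h)`. -/
noncomputable def gradSmooth {d m K : ℕ} (S : Matrix (Fin d) (Fin K) ℝ)
    (U : Matrix (Fin m) (Fin K) ℝ) (x : Fin d → ℝ) (h : Fin m → ℝ)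
    (g : Fin K → ℝ) : Fin K → ℝ :=
  Sᵀ.mulVec (S.mulVec g - x) + Uᵀ.mulVec (U.mulVec g - h)

/-- ℓ2 operator (spectral) norm of a square matrix acting on Euclidean space. -/
noncomputable def l2OpNorm {K : ℕ} (M : Matrix (Fin K) (Fin K) ℝ) : ℝ :=
  ‖LinearMap.toContinuousLinearMap (Matrix.toEuclideanLin M)‖

/-- Coordinatewise soft-thresholding operator `soft(z, τ)ᵢ = sign(zᵢ)·max(|zᵢ| − τ, 0)`. -/
noncomputable def softThresh {K : ℕ} (z : Fin K → ℝ) (τ : ℝ) : Fin K → ℝ :=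
  fun i => Real.sign (z i) * max (|z i| - τ) 0

private lemma soft1 (z τ w : ℝ) (hτ : 0 ≤ τ) :
    τ * |Real.sign z * max (|z| - τ) 0| +
      (z - Real.sign z * max (|z| - τ) 0) * (w - Real.sign z * max (|z| - τ) 0) ≤ τ * |w| := by
  rcases lt_trichotomy z 0 with hz | hz | hz
  · rw [Real.sign_of_neg hz, abs_of_neg hz]
    rcases le_or_gt (-z) τ with h1 | h1
    · rw [max_eq_right (by linarith)]
      simp only [mul_zero, sub_zero, abs_zero, add_zero, zero_add]
      nlinarith [neg_abs_le w, le_abs_self w, abs_nonneg w]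
    · rw [max_eq_left (by linarith)]
      have e : |(-1 : ℝ) * (-z - τ)| = -z - τ := by
        rw [show (-1 : ℝ) * (-z - τ) = z + τ by ring, abs_of_nonpos (by linarith)]; ring
      rw [e]
      nlinarith [neg_abs_le w, le_abs_self w]
  · simp [hz, Real.sign_zero]
    positivity
  · rw [Real.sign_of_pos hz, abs_of_pos hz]
    rcases le_or_gt z τ with h1 | h1
    · rw [max_eq_right (by linarith)]
      simp only [mul_zero, sub_zero, abs_zero, add_zero, zero_add]
      nlinarith [neg_abs_le w, le_abs_self w, abs_nonneg w]
    · rw [max_eq_left (by linarith)]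
      have e : |(1 : ℝ) * (z - τ)| = z - τ := by
        rw [one_mul, abs_of_nonneg (by linarith)]
      rw [e]
      nlinarith [le_abs_self w]

private lemma adj {d K : ℕ} (M : Matrix (Fin d) (Fin K) ℝ) (u : Fin d → ℝ) (v : Fin K → ℝ) :
    ∑ i, Mᵀ.mulVec u i * v i = ∑ a, u a * M.mulVec v a := by
  simp only [mulVec, dotProduct, transpose_apply, Finset.sum_mul, Finset.mul_sum]
  rw [Finset.sum_comm]
  exact Finset.sum_congr rfl fun a _ => Finset.sum_congr rfl fun i _ => by ring

private lemma expand {d m K : ℕ} (S : Matrix (Fin d) (Fin K) ℝ)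
    (U : Matrix (Fin m) (Fin K) ℝ) (x : Fin d → ℝ) (h : Fin m → ℝ)
    (g w : Fin K → ℝ) :
    smoothPart S U x h w = smoothPart S U x h g
      + (∑ i, gradSmooth S U x h g i * ((w - g) i))
      + (1/2) * ((∑ a, (S.mulVec (w - g) a)^2) + (∑ b, (U.mulVec (w - g) b)^2)) := by
  have eS : ∀ a, S.mulVec w a = S.mulVec g a + S.mulVec (w - g) a := by
    intro a; rw [Matrix.mulVec_sub]; simp
  have eU : ∀ b, U.mulVec w b = U.mulVec g b + U.mulVec (w - g) b := by
    intro b; rw [Matrix.mulVec_sub]; simp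
  have hg : ∑ i, gradSmooth S U x h g i * ((w - g) i)
      = (∑ a, (S.mulVec g a - x a) * S.mulVec (w - g) a)
        + (∑ b, (U.mulVec g b - h b) * U.mulVec (w - g) b) := by
    unfold gradSmooth
    simp only [Pi.add_apply, add_mul]
    rw [Finset.sum_add_distrib, adj S, adj U]
    simp only [Pi.sub_apply]
  have q1 : ∑ a, (x a - S.mulVec w a)^2
      = (∑ a, (x a - S.mulVec g a)^2)
        + 2 * (∑ a, (S.mulVec g a - x a) * S.mulVec (w - g) a)
        + ∑ a, (S.mulVec (w - g) a)^2 := by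
    rw [Finset.mul_sum, ← Finset.sum_add_distrib, ← Finset.sum_add_distrib]
    exact Finset.sum_congr rfl fun a _ => by rw [eS a]; ring
  have q2 : ∑ b, (h b - U.mulVec w b)^2
      = (∑ b, (h b - U.mulVec g b)^2)
        + 2 * (∑ b, (U.mulVec g b - h b) * U.mulVec (w - g) b)
        + ∑ b, (U.mulVec (w - g) b)^2 := by
    rw [Finset.mul_sum, ← Finset.sum_add_distrib, ← Finset.sum_add_distrib]
    exact Finset.sum_congr rfl fun b _ => by rw [eU b]; ring
  unfold smoothPart
  rw [q1, q2, hg]; ring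

private lemma hessBound {d m K : ℕ} (S : Matrix (Fin d) (Fin K) ℝ)
    (U : Matrix (Fin m) (Fin K) ℝ) (v : Fin K → ℝ) :
    (∑ a, (S.mulVec v a)^2) + (∑ b, (U.mulVec v b)^2)
      ≤ l2OpNorm (Sᵀ * S + Uᵀ * U) * ∑ i, v i ^ 2 := by
  set Q := Sᵀ * S + Uᵀ * U with hQdef
  have h1 : ∑ i, Q.mulVec v i * v i
      = (∑ a, (S.mulVec v a)^2) + (∑ b, (U.mulVec v b)^2) := by
    have hQ : ∀ i, Q.mulVec v i
        = Sᵀ.mulVec (S.mulVec v) i + Uᵀ.mulVec (U.mulVec v) i := by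
      intro i
      rw [hQdef, Matrix.add_mulVec, Matrix.mulVec_mulVec, Matrix.mulVec_mulVec]
      rfl
    calc ∑ i, Q.mulVec v i * v i
        = ∑ i, (Sᵀ.mulVec (S.mulVec v) i * v i + Uᵀ.mulVec (U.mulVec v) i * v i) :=
          Finset.sum_congr rfl fun i _ => by rw [hQ i]; ring
      _ = (∑ i, Sᵀ.mulVec (S.mulVec v) i * v i) + ∑ i, Uᵀ.mulVec (U.mulVec v) i * v i :=
          Finset.sum_add_distrib
      _ = _ := by rw [adj S, adj U]; simp [sq]
  set v' : EuclideanSpace ℝ (Fin K) := (WithLp.equiv 2 _).symm v with hv'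
  set T := LinearMap.toContinuousLinearMap (Matrix.toEuclideanLin Q) with hT
  have hTv : ∀ i, (T v') i = Q.mulVec v i := fun i => rfl
  have hinner : ∀ u u' : EuclideanSpace ℝ (Fin K), ⟪u, u'⟫ = ∑ i, u i * u' i := by
    intro u u'
    simp [PiLp.inner_apply, RCLike.inner_apply, mul_comm]
  have h2 : ∑ i, Q.mulVec v i * v i ≤ ‖T‖ * ∑ i, v i ^ 2 := by
    have c1 : ⟪T v', v'⟫ ≤ ‖T v'‖ * ‖v'‖ := real_inner_le_norm _ _
    have c2 : ‖T v'‖ ≤ ‖T‖ * ‖v'‖ := T.le_opNorm v'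
    have c3 : ⟪T v', v'⟫ = ∑ i, Q.mulVec v i * v i := by
      rw [hinner]; exact Finset.sum_congr rfl fun i _ => rfl
    have c4 : ‖v'‖ ^ 2 = ∑ i, v i ^ 2 := by
      rw [← real_inner_self_eq_norm_sq, hinner]
      exact Finset.sum_congr rfl fun i _ => by show v i * v i = v i ^ 2; ring
    nlinarith [norm_nonneg v', norm_nonneg (T v'), ContinuousLinearMap.opNorm_nonneg T]
  rw [← h1]
  exact h2

private lemma key {d m K : ℕ} (S : Matrix (Fin d) (Fin K) ℝ)
    (U : Matrix (Fin m) (Fin K) ℝ) (x : Fin d → ℝ) (h : Fin m → ℝ)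
    (lam : ℝ) (hlam : 0 ≤ lam) (L : ℝ) (hLdef : L = l2OpNorm (Sᵀ * S + Uᵀ * U))
    (hL : 0 < L) (g w v : Fin K → ℝ)
    (hv : v = softThresh (g - (1 / L) • gradSmooth S U x h g) (lam / L)) :
    energy S U x h lam v ≤ energy S U x h lam w
      + L / 2 * ((∑ i, (g i - w i) ^ 2) - ∑ i, (v i - w i) ^ 2) := by
  set z : Fin K → ℝ := g - (1 / L) • gradSmooth S U x h g with hz
  set grad : Fin K → ℝ := gradSmooth S U x h g with hgrad
  have hτ : 0 ≤ lam / L := div_nonneg hlam hL.le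
  have hvi : ∀ i, v i = Real.sign (z i) * max (|z i| - lam / L) 0 := by
    intro i; rw [hv]; rfl
  have hzi : ∀ i, z i = g i - (1 / L) * grad i := by
    intro i; rw [hz]; simp [Pi.sub_apply, Pi.smul_apply]
  -- step (a): summed soft-threshold inequality
  have hsum : (lam / L) * (∑ i, |v i|) + (∑ i, (z i - v i) * (w i - v i))
      ≤ (lam / L) * ∑ i, |w i| := by
    rw [Finset.mul_sum, Finset.mul_sum, ← Finset.sum_add_distrib]
    apply Finset.sum_le_sum
    intro i _
    rw [hvi i]
    exact soft1 (z i) (lam / L) (w i) hτ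
  have ha : lam * (∑ i, |v i|) + L * (∑ i, (z i - v i) * (w i - v i))
      ≤ lam * ∑ i, |w i| := by
    have h' := mul_le_mul_of_nonneg_left hsum hL.le
    have hLlam : L * (lam / L) = lam := by field_simp
    rw [mul_add] at h'
    simp only [← mul_assoc] at h'
    rw [hLlam] at h'
    exact h'
  have hb : L * (∑ i, (z i - v i) * (w i - v i))
      = L * (∑ i, (g i - v i) * (w i - v i)) - ∑ i, grad i * (w i - v i) := by
    rw [Finset.mul_sum, Finset.mul_sum, ← Finset.sum_sub_distrib]
    apply Finset.sum_congr rfl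
    intro i _
    rw [hzi i]
    field_simp
    ring
  -- descent and convexity
  have e1 := expand S U x h g v
  have e2 := expand S U x h g w
  have e3 : (∑ a, (S.mulVec (v - g) a)^2) + (∑ b, (U.mulVec (v - g) b)^2)
      ≤ L * ∑ i, ((v - g) i) ^ 2 := hLdef ▸ hessBound S U (v - g)
  have e4 : (0:ℝ) ≤ (∑ a, (S.mulVec (w - g) a)^2) + (∑ b, (U.mulVec (w - g) b)^2) := by
    positivity
  have hzero : (∑ i, grad i * ((v - g) i)) - (∑ i, grad i * ((w - g) i))
      + (∑ i, grad i * (w i - v i)) = 0 := by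
    rw [← Finset.sum_sub_distrib, ← Finset.sum_add_distrib]
    apply Finset.sum_eq_zero
    intro i _
    simp only [Pi.sub_apply]
    ring
  have h0 : (∑ i, ((v - g) i) ^ 2) - 2 * (∑ i, (g i - v i) * (w i - v i))
      = (∑ i, (g i - w i) ^ 2) - ∑ i, (v i - w i) ^ 2 := by
    rw [Finset.mul_sum, ← Finset.sum_sub_distrib, ← Finset.sum_sub_distrib]
    apply Finset.sum_congr rfl
    intro i _
    simp only [Pi.sub_apply]
    ring
  have hid : L / 2 * (∑ i, ((v - g) i) ^ 2) - L * (∑ i, (g i - v i) * (w i - v i))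
      = L / 2 * ((∑ i, (g i - w i) ^ 2) - ∑ i, (v i - w i) ^ 2) := by
    linear_combination (L / 2) * h0
  unfold energy
  rw [← hgrad] at e1 e2
  linarith [e1, e2, e3, e4, ha, hb, hzero, hid]

private lemma rate_aux (C : ℝ) (D A : ℕ → ℝ) (hdec : ∀ t, D (t + 1) ≤ D t)
    (hrate : ∀ t, D (t + 1) ≤ C * (A t - A (t + 1))) :
    ∀ t : ℕ, (t : ℝ) * D t ≤ C * (A 0 - A t) := by
  intro t
  induction t with
  | zero => simp
  | succ n ih =>
    have h1 := hrate n
    have hn : (n : ℝ) * D (n + 1) ≤ (n : ℝ) * D n :=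
      mul_le_mul_of_nonneg_left (hdec n) (Nat.cast_nonneg n)
    push_cast
    nlinarith [h1, hn, ih]

/-- `O(1/t)` convergence rate of ISTA with step size `1/L`:
`E(g⁽ᵗ⁾) − E(g*) ≤ L‖g⁽⁰⁾ − g*‖₂²/(2t)` for all `t ≥ 1`. -/
theorem ista_convergence_rate {d m K : ℕ}
    (S : Matrix (Fin d) (Fin K) ℝ) (U : Matrix (Fin m) (Fin K) ℝ)
    (x : Fin d → ℝ) (h : Fin m → ℝ) (lam : ℝ) (hlam : 0 ≤ lam)
    (L : ℝ) (hLdef : L = l2OpNorm (Sᵀ * S + Uᵀ * U)) (hL : 0 < L)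
    (g0 : Fin K → ℝ) (seq : ℕ → Fin K → ℝ)
    (hseq0 : seq 0 = g0)
    (hstep : ∀ t : ℕ,
      seq (t + 1) = softThresh (seq t - (1 / L) • gradSmooth S U x h (seq t)) (lam / L))
    (gstar : Fin K → ℝ)
    (hstar : ∀ w : Fin K → ℝ, energy S U x h lam gstar ≤ energy S U x h lam w) :
    ∀ t : ℕ, 1 ≤ t →
      energy S U x h lam (seq t) - energy S U x h lam gstar ≤
        L * (∑ i, (g0 i - gstar i) ^ 2) / (2 * (t : ℝ)) := by
  have hkey : ∀ (t : ℕ) (w : Fin K → ℝ),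
      energy S U x h lam (seq (t + 1)) ≤ energy S U x h lam w
        + L / 2 * ((∑ i, (seq t i - w i) ^ 2) - ∑ i, (seq (t + 1) i - w i) ^ 2) :=
    fun t w => key S U x h lam hlam L hLdef hL (seq t) w (seq (t + 1)) (hstep t)
  have hdec : ∀ t, energy S U x h lam (seq (t + 1)) - energy S U x h lam gstar
      ≤ energy S U x h lam (seq t) - energy S U x h lam gstar := by
    intro t
    have h1 := hkey t (seq t)
    have h2 : (∑ i, (seq t i - seq t i) ^ 2) = 0 := by simp
    have h3 : (0:ℝ) ≤ ∑ i, (seq (t + 1) i - seq t i) ^ 2 := by positivity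
    nlinarith [h1]
  have hrate : ∀ t, energy S U x h lam (seq (t + 1)) - energy S U x h lam gstar
      ≤ L / 2 * ((∑ i, (seq t i - gstar i) ^ 2) - ∑ i, (seq (t + 1) i - gstar i) ^ 2) := by
    intro t
    linarith [hkey t gstar]
  have claim := rate_aux (L / 2)
    (fun t => energy S U x h lam (seq t) - energy S U x h lam gstar)
    (fun t => ∑ i, (seq t i - gstar i) ^ 2) hdec hrate
  intro t ht
  have ht1 : (1 : ℝ) ≤ (t : ℝ) := by exact_mod_cast ht
  have hc := claim t
  simp only [hseq0] at hc
  have hAnn : (0:ℝ) ≤ ∑ i, (seq t i - gstar i) ^ 2 := by positivity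
  have hA0nn : (0:ℝ) ≤ ∑ i, (g0 i - gstar i) ^ 2 := by positivity
  rw [le_div_iff₀ (by positivity : (0:ℝ) < 2 * (t:ℝ))]
  nlinarith [hc, hAnn, hA0nn, hL, ht1, mul_nonneg hL.le hAnn]
end

section
/- Fix x ∈ ℝ^d and λ ≥ 0, and for S ∈ ℝ^{d×K} and g ∈ ℝ^K let E(g, S) = (1/2)‖x − Sg‖₂² + λ‖g‖₁. Let S₀ ∈ ℝ^{d×K}, and suppose g* : ℝ^{d×K} → ℝ^K is a map, continuous at S₀, such that for every S in some neighborhood of S₀ the point g*(S) is a global minimizer of E(·, S) over ℝ^K. Then the value function ℒ(S) = E(g*(S), S) is Fréchet differentiable at S₀, with derivative the linear map W ↦ −⟨x − S₀·g*(S₀), W·g*(S₀)⟩ on ℝ^{d×K}; equivalently, identifying the gradient with a d×K matrix, ∇ℒ(S₀) = −r·(g*(S₀))ᵀ where r = x − S₀·g*(S₀) is the reconstruction residual. In particular, the Atomic-Hebb update ΔS ∝ r·(g*)ᵀ is exact gradient descent on the equilibrium energy. -/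
/-!
Envelope argument. Write `g₀ = g*(S₀)` and `D_g` for the derivative at `S₀` of
`S ↦ ½‖x − S g‖²`; the penalty does not depend on `S`, so it cancels from every difference
`E(g, S) − E(g, S₀)`. Minimality of `g*(S)` and of `g₀` gives
`E(g*(S), S) − E(g*(S), S₀) ≤ ℒ(S) − ℒ(S₀) ≤ E(g₀, S) − E(g₀, S₀)`.
The right side is `D_{g₀}(S − S₀) + o(‖S − S₀‖)`. As `E(g, ·)` is a convex quadratic, the left
side is at least `D_{g*(S)}(S − S₀)`, which is `D_{g₀}(S − S₀) + o(‖S − S₀‖)` because `g ↦ D_g`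
is continuous and `g*` is continuous at `S₀`.
-/

open Filter Asymptotics Topology Matrix

theorem Asymptotics.IsLittleO.of_le_of_le {α E : Type*} [Norm E] {l : Filter α}
    {φ u v : α → ℝ} {k : α → E} (hu : u =o[l] k) (hv : v =o[l] k)
    (hle : ∀ᶠ t in l, u t ≤ φ t ∧ φ t ≤ v t) : φ =o[l] k := by
  refine isLittleO_iff.2 fun ε hε => ?_
  filter_upwards [hu.def hε, hv.def hε, hle] with t hut hvt ⟨hlo, hhi⟩
  rw [Real.norm_eq_abs] at *
  exact abs_le.2 ⟨by linarith [neg_abs_le (u t)], by linarith [le_abs_self (v t)]⟩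

theorem Filter.Tendsto.isLittleO_clm_apply {α 𝕜 E F : Type*} [NontriviallyNormedField 𝕜]
    [NormedAddCommGroup E] [NormedSpace 𝕜 E] [NormedAddCommGroup F] [NormedSpace 𝕜 F]
    {l : Filter α} {A : α → E →L[𝕜] F} (hA : Tendsto A l (𝓝 0)) (u : α → E) :
    (fun t => A t (u t)) =o[l] u := by
  refine isLittleO_iff.2 fun ε hε => ?_
  filter_upwards [hA (Metric.closedBall_mem_nhds 0 hε)] with t ht
  calc ‖A t (u t)‖ ≤ ‖A t‖ * ‖u t‖ := (A t).le_opNorm _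
    _ ≤ ε * ‖u t‖ := by gcongr; simpa using ht

theorem hasFDerivAt_envelope {G X : Type*} [NormedAddCommGroup X] [NormedSpace ℝ X]
    {F : G → X → ℝ} {D : G → X →L[ℝ] ℝ} {gstar : X → G} {S₀ : X}
    (hsupp : ∀ g S, F g S₀ + D g (S - S₀) ≤ F g S)
    (hderiv : HasFDerivAt (F (gstar S₀)) (D (gstar S₀)) S₀)
    (hD : ContinuousAt (fun S => D (gstar S)) S₀)
    (hmin : ∀ᶠ S in 𝓝 S₀, ∀ g, F (gstar S) S ≤ F g S) :
    HasFDerivAt (fun S => F (gstar S) S) (D (gstar S₀)) S₀ := by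
  have hlower := (tendsto_sub_nhds_zero_iff.2 hD.tendsto).isLittleO_clm_apply (· - S₀)
  refine HasFDerivAt.of_isLittleO (hlower.of_le_of_le hderiv.isLittleO ?_)
  filter_upwards [hmin] with S hS
  have hS₀ := hmin.self_of_nhds (gstar S)
  have hsuppS := hsupp (gstar S) S
  have hg₀ := hS (gstar S₀)
  simp only [_root_.sub_apply]
  constructor <;> linarith

section CodingEnergy

variable {m n : Type*} [Fintype m] [Fintype n]

noncomputable def codingEnergy (x : m → ℝ) (pen : (n → ℝ) → ℝ) (g : n → ℝ) (S : m → n → ℝ) : ℝ :=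
  (1 / 2) * ((x - S *ᵥ g) ⬝ᵥ (x - S *ᵥ g)) + pen g

noncomputable def codingEnergyDeriv (x : m → ℝ) (S₀ : m → n → ℝ) (g : n → ℝ) :
    (m → n → ℝ) →L[ℝ] ℝ :=
  LinearMap.toContinuousLinearMap
    { toFun := fun W => -((x - S₀ *ᵥ g) ⬝ᵥ (W *ᵥ g))
      map_add' := fun W V => by
        rw [show (W + V) *ᵥ g = W *ᵥ g + V *ᵥ g from add_mulVec _ _ _, dotProduct_add, neg_add]
      map_smul' := fun c W => by
        rw [show (c • W) *ᵥ g = c • W *ᵥ g from smul_mulVec _ _ _, dotProduct_smul, smul_eq_mul,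
          RingHom.id_apply, smul_eq_mul, mul_neg] }

theorem codingEnergyDeriv_apply (x : m → ℝ) (S₀ W : m → n → ℝ) (g : n → ℝ) :
    codingEnergyDeriv x S₀ g W = -((x - S₀ *ᵥ g) ⬝ᵥ (W *ᵥ g)) := rfl

theorem continuous_codingEnergyDeriv (x : m → ℝ) (S₀ : m → n → ℝ) :
    Continuous (codingEnergyDeriv x S₀) := by
  refine continuous_clm_apply.2 fun W => ?_
  simp only [codingEnergyDeriv_apply]
  fun_prop

theorem codingEnergy_add (x : m → ℝ) (pen : (n → ℝ) → ℝ) (g : n → ℝ) (S₀ W : m → n → ℝ) :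
    codingEnergy x pen g (S₀ + W) = codingEnergy x pen g S₀ + codingEnergyDeriv x S₀ g W
      + (1 / 2) * ((W *ᵥ g) ⬝ᵥ (W *ᵥ g)) := by
  rw [codingEnergy, codingEnergy, codingEnergyDeriv_apply,
    show (S₀ + W) *ᵥ g = S₀ *ᵥ g + W *ᵥ g from add_mulVec _ _ _, ← sub_sub]
  generalize x - S₀ *ᵥ g = r
  generalize W *ᵥ g = v
  rw [sub_dotProduct, dotProduct_sub, dotProduct_sub, dotProduct_comm v r]
  ring

theorem codingEnergy_add_codingEnergyDeriv_le (x : m → ℝ) (pen : (n → ℝ) → ℝ) (S₀ : m → n → ℝ)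
    (g : n → ℝ) (S : m → n → ℝ) :
    codingEnergy x pen g S₀ + codingEnergyDeriv x S₀ g (S - S₀) ≤ codingEnergy x pen g S := by
  have hsq : 0 ≤ ((S - S₀) *ᵥ g) ⬝ᵥ ((S - S₀) *ᵥ g) :=
    Finset.sum_nonneg fun a _ => mul_self_nonneg _
  have hexp := codingEnergy_add x pen g S₀ (S - S₀)
  rw [add_sub_cancel] at hexp
  linarith

theorem isLittleO_mulVec_dotProduct_self (g : n → ℝ) :
    (fun W : m → n → ℝ => (W *ᵥ g) ⬝ᵥ (W *ᵥ g)) =o[𝓝 0] fun W => W := by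
  have hcoord (a : m) (i : n) : (fun W : m → n → ℝ => W a i) =O[𝓝 0] fun W => ‖W‖ :=
    isBigO_norm_right.2 (isBigO_pi.1 (isBigO_pi.1 (isBigO_refl _ _) a) i)
  have hmulVec (a : m) : (fun W : m → n → ℝ => (W *ᵥ g) a) =O[𝓝 0] fun W => ‖W‖ :=
    IsBigO.fun_sum fun i _ => by simpa only [mul_comm] using (hcoord a i).const_mul_left (g i)
  have hsq : (fun W : m → n → ℝ => (W *ᵥ g) ⬝ᵥ (W *ᵥ g)) =O[𝓝 0] fun W => ‖W‖ ^ 2 := by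
    simp_rw [sq]
    exact IsBigO.fun_sum fun a _ => (hmulVec a).mul (hmulVec a)
  exact hsq.trans_isLittleO (isLittleO_norm_pow_id one_lt_two)

theorem hasFDerivAt_codingEnergy (x : m → ℝ) (pen : (n → ℝ) → ℝ) (g : n → ℝ) (S₀ : m → n → ℝ) :
    HasFDerivAt (codingEnergy x pen g) (codingEnergyDeriv x S₀ g) S₀ := by
  refine hasFDerivAt_iff_isLittleO_nhds_zero.2 ?_
  refine ((isLittleO_mulVec_dotProduct_self g).const_mul_left (1 / 2)).congr_left fun W => ?_
  rw [codingEnergy_add]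
  ring

end CodingEnergy

theorem atomic_hebb_danskin_general {d K : ℕ} (x : Fin d → ℝ) (lam : ℝ)
    (E : (Fin K → ℝ) → (Fin d → Fin K → ℝ) → ℝ)
    (hE : ∀ (g : Fin K → ℝ) (S : Fin d → Fin K → ℝ),
      E g S = (1 / 2) * (∑ a, (x a - ∑ i, S a i * g i) ^ 2) + lam * ∑ i, |g i|)
    (S₀ : Fin d → Fin K → ℝ)
    (gstar : (Fin d → Fin K → ℝ) → (Fin K → ℝ))
    (hcont : ContinuousAt gstar S₀)
    (hmin : ∀ᶠ S in nhds S₀, ∀ w : Fin K → ℝ, E (gstar S) S ≤ E w S) :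
    ∃ D : (Fin d → Fin K → ℝ) →L[ℝ] ℝ,
      (∀ W : Fin d → Fin K → ℝ,
        D W = -(∑ a, (x a - ∑ i, S₀ a i * gstar S₀ i) * (∑ i, W a i * gstar S₀ i))) ∧
      HasFDerivAt (fun S => E (gstar S) S) D S₀ := by
  obtain rfl : E = codingEnergy x fun g => lam * ∑ i, |g i| := by
    funext g S
    simp only [hE, codingEnergy, dotProduct, mulVec, Pi.sub_apply, sq]
  refine ⟨codingEnergyDeriv x S₀ (gstar S₀), fun W => rfl, ?_⟩
  exact hasFDerivAt_envelope (codingEnergy_add_codingEnergyDeriv_le x _ S₀)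
    (hasFDerivAt_codingEnergy x _ _ S₀)
    ((continuous_codingEnergyDeriv x S₀).continuousAt.comp hcont) hmin

/-- Danskin / envelope theorem for the Vector Network equilibrium energy: if `g*(S)` is a
global minimizer of `E(·, S) = ½‖x − Sg‖₂² + λ‖g‖₁` for all `S` near `S₀` and `g*` is
continuous at `S₀`, then the value function `ℒ(S) = E(g*(S), S)` is Fréchet
differentiable at `S₀` with derivative `W ↦ −⟨x − S₀ g*(S₀), W g*(S₀)⟩`, i.e.
`∇ℒ(S₀) = −r (g*(S₀))ᵀ` with residual `r = x − S₀ g*(S₀)`. -/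
theorem atomic_hebb_danskin {d K : ℕ} (x : Fin d → ℝ) (lam : ℝ) (hlam : 0 ≤ lam)
    (E : (Fin K → ℝ) → (Fin d → Fin K → ℝ) → ℝ)
    (hE : ∀ (g : Fin K → ℝ) (S : Fin d → Fin K → ℝ),
      E g S = (1 / 2) * (∑ a, (x a - ∑ i, S a i * g i) ^ 2) + lam * ∑ i, |g i|)
    (S₀ : Fin d → Fin K → ℝ)
    (gstar : (Fin d → Fin K → ℝ) → (Fin K → ℝ))
    (hcont : ContinuousAt gstar S₀)
    (hmin : ∀ᶠ S in nhds S₀, ∀ w : Fin K → ℝ, E (gstar S) S ≤ E w S) :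
    ∃ D : (Fin d → Fin K → ℝ) →L[ℝ] ℝ,
      (∀ W : Fin d → Fin K → ℝ,
        D W = -(∑ a, (x a - ∑ i, S₀ a i * gstar S₀ i) * (∑ i, W a i * gstar S₀ i))) ∧
      HasFDerivAt (fun S => E (gstar S) S) D S₀ :=
  atomic_hebb_danskin_general x lam E hE S₀ gstar hcont hmin
end

section
/- Let z ∈ ℝ^K, τ ≥ 0, and k ≤ K. Let T be any set of k coordinate indices such that |z_i| ≥ |z_j| for every i ∈ T and j ∉ T, and define w* ∈ ℝ^K by w*_i = soft(z, τ)_i for i ∈ T and w*_i = 0 for i ∉ T. Then w* minimizes the function w ↦ (1/2)‖w − z‖₂² + τ‖w‖₁ over the set {w ∈ ℝ^K : ‖w‖₀ ≤ k}; that is, the composition of soft-thresholding with top-k magnitude truncation is a proximal operator of τ‖·‖₁ plus the indicator of the k-sparse ball. -/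
open scoped Classical

/-- value of the per-coordinate objective at the soft-threshold point -/
lemma soft_val (z τ : ℝ) (hτ : 0 ≤ τ) :
    (1/2) * (Real.sign z * max (|z| - τ) 0 - z)^2 + τ * |Real.sign z * max (|z| - τ) 0|
      = (1/2) * z^2 - (1/2) * (max (|z| - τ) 0)^2 := by
  rcases le_or_gt (|z|) τ with h | h
  · have hm : max (|z| - τ) 0 = 0 := max_eq_right (by linarith)
    rw [hm]; simp
  · have hm : max (|z| - τ) 0 = |z| - τ := max_eq_left (by linarith)
    have hz : z ≠ 0 := by
      intro h0; rw [h0] at h; simp at h; linarith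
    rcases lt_trichotomy z 0 with hneg | h0 | hpos
    · have hs : Real.sign z = -1 := Real.sign_of_neg hneg
      have ha : |z| = -z := abs_of_neg hneg
      rw [hs, hm, ha]
      have habs : |(-1 : ℝ) * (-z - τ)| = -z - τ := by
        have : (-1 : ℝ) * (-z - τ) = z + τ := by ring
        rw [this, abs_of_nonpos (by linarith)]
        ring
      rw [habs]; ring
    · exact absurd h0 hz
    · have hs : Real.sign z = 1 := Real.sign_of_pos hpos
      have ha : |z| = z := abs_of_pos hpos
      rw [hs, hm, ha]
      have habs : |(1 : ℝ) * (z - τ)| = z - τ := by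
        rw [abs_of_nonneg (by nlinarith)]; ring
      rw [habs]; ring

/-- the soft-threshold value is a lower bound on the per-coordinate objective -/
lemma soft_opt (z τ w : ℝ) (hτ : 0 ≤ τ) :
    (1/2) * z^2 - (1/2) * (max (|z| - τ) 0)^2 ≤ (1/2) * (w - z)^2 + τ * |w| := by
  rcases le_or_gt (|z|) τ with h | h
  · have hm : max (|z| - τ) 0 = 0 := max_eq_right (by linarith)
    rw [hm]
    have h1 : w * z ≤ |w| * |z| := by
      calc w * z ≤ |w * z| := le_abs_self _
        _ = |w| * |z| := abs_mul _ _
    nlinarith [abs_nonneg w, sq_nonneg w]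
  · have hm : max (|z| - τ) 0 = |z| - τ := max_eq_left (by linarith)
    rw [hm]
    have h1 : |z| - |w| ≤ |w - z| := by
      calc |z| - |w| ≤ |z - w| := abs_sub_abs_le_abs_sub z w
        _ = |w - z| := abs_sub_comm z w
    have h2 : |w - z|^2 = (w - z)^2 := sq_abs _
    have h3 : |z|^2 = z^2 := sq_abs _
    nlinarith [sq_nonneg (|w - z| - τ), abs_nonneg w, abs_nonneg (w - z)]

/-- top-k sum dominance -/
lemma sum_topk {K : ℕ} (T S : Finset (Fin K)) (g : Fin K → ℝ)
    (hgnn : ∀ i, 0 ≤ g i) (hcard : S.card ≤ T.card)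
    (hmono : ∀ i ∈ T, ∀ j ∉ T, g j ≤ g i) :
    ∑ i ∈ S, g i ≤ ∑ i ∈ T, g i := by
  rw [← Finset.sum_inter_add_sum_sdiff S T g, ← Finset.sum_inter_add_sum_sdiff T S g,
    Finset.inter_comm T S]
  have hdcard : (S \ T).card ≤ (T \ S).card := by
    have h1 := Finset.card_sdiff_add_card_inter S T
    have h2 := Finset.card_sdiff_add_card_inter T S
    rw [Finset.inter_comm T S] at h2
    omega
  have hkey : ∑ i ∈ S \ T, g i ≤ ∑ i ∈ T \ S, g i := by
    rcases Finset.eq_empty_or_nonempty (S \ T) with he | hne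
    · rw [he]; simp
      exact Finset.sum_nonneg fun i _ => hgnn i
    · have hTS : (T \ S).Nonempty := by
        rw [← Finset.card_pos] at hne ⊢; omega
      obtain ⟨j₀, hj₀, hmin⟩ := Finset.exists_min_image (T \ S) g hTS
      have hj₀T : j₀ ∈ T := (Finset.mem_sdiff.mp hj₀).1
      calc ∑ i ∈ S \ T, g i ≤ (S \ T).card • g j₀ := by
            apply Finset.sum_le_card_nsmul
            intro i hi
            exact hmono j₀ hj₀T i (Finset.mem_sdiff.mp hi).2
        _ ≤ (T \ S).card • g j₀ := by
            simp only [nsmul_eq_mul]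
            exact mul_le_mul_of_nonneg_right (by exact_mod_cast hdcard) (hgnn j₀)
        _ ≤ ∑ i ∈ T \ S, g i := Finset.card_nsmul_le_sum _ _ _ hmin
  linarith

/-- Soft-thresholding followed by top-`k` magnitude truncation is a proximal operator of
`τ‖·‖₁` plus the indicator of the `k`-sparse ball: `w*` minimizes
`w ↦ ½‖w − z‖₂² + τ‖w‖₁` over `{w : ‖w‖₀ ≤ k}`. -/
theorem soft_then_topk_is_prox {K : ℕ} (z : Fin K → ℝ) (τ : ℝ) (hτ : 0 ≤ τ)
    (k : ℕ) (hk : k ≤ K)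
    (T : Finset (Fin K)) (hTcard : T.card = k)
    (hT : ∀ i ∈ T, ∀ j ∉ T, |z j| ≤ |z i|)
    (wstar : Fin K → ℝ)
    (hwstar : ∀ i, wstar i = if i ∈ T then softThresh z τ i else 0) :
    l0norm wstar ≤ k ∧
      ∀ w : Fin K → ℝ, l0norm w ≤ k →
        (1 / 2) * (∑ i, (wstar i - z i) ^ 2) + τ * ∑ i, |wstar i| ≤
          (1 / 2) * (∑ i, (w i - z i) ^ 2) + τ * ∑ i, |w i| := by
  have hobj : ∀ v : Fin K → ℝ,
      (1 / 2) * (∑ i, (v i - z i) ^ 2) + τ * ∑ i, |v i|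
        = ∑ i, ((1/2) * (v i - z i)^2 + τ * |v i|) := by
    intro v
    rw [Finset.mul_sum, Finset.mul_sum, ← Finset.sum_add_distrib]
  set g : Fin K → ℝ := fun i => (1/2) * (max (|z i| - τ) 0)^2 with hg
  have hgnn : ∀ i, 0 ≤ g i := by
    intro i; positivity
  have hgmono : ∀ i ∈ T, ∀ j ∉ T, g j ≤ g i := by
    intro i hi j hj
    have h1 := hT i hi j hj
    have h2 : max (|z j| - τ) 0 ≤ max (|z i| - τ) 0 :=
      max_le_max (by linarith) le_rfl
    have h3 : (0:ℝ) ≤ max (|z j| - τ) 0 := le_max_right _ _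
    simp only [hg]
    nlinarith
  constructor
  · have hsub : (Finset.univ.filter fun i => wstar i ≠ 0) ⊆ T := by
      intro i hi
      by_contra h
      simp only [Finset.mem_filter] at hi
      exact hi.2 (by rw [hwstar i, if_neg h])
    calc l0norm wstar ≤ T.card := Finset.card_le_card hsub
      _ = k := hTcard
  · intro w hw
    set S : Finset (Fin K) := Finset.univ.filter fun i => w i ≠ 0 with hS
    have hScard : S.card ≤ k := hw
    have hwS : ∀ i ∉ S, w i = 0 := by
      intro i hi
      by_contra h
      exact hi (Finset.mem_filter.mpr ⟨Finset.mem_univ i, h⟩)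
    rw [hobj wstar, hobj w]
    have hstar : ∑ i, ((1/2) * (wstar i - z i)^2 + τ * |wstar i|)
        = (∑ i, (1/2) * (z i)^2) - ∑ i ∈ T, g i := by
      have heach : ∀ i, (1/2) * (wstar i - z i)^2 + τ * |wstar i|
          = (1/2) * (z i)^2 - (if i ∈ T then g i else 0) := by
        intro i
        rw [hwstar i]
        by_cases h : i ∈ T
        · rw [if_pos h, if_pos h]
          simpa [softThresh, hg] using soft_val (z i) τ hτ
        · rw [if_neg h, if_neg h]; simp
      rw [Finset.sum_congr rfl fun i _ => heach i, Finset.sum_sub_distrib]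
      congr 1
      simp [Finset.sum_ite_mem]
    have hlow : (∑ i, (1/2) * (z i)^2) - ∑ i ∈ S, g i
        ≤ ∑ i, ((1/2) * (w i - z i)^2 + τ * |w i|) := by
      have heach : ∀ i, (1/2) * (z i)^2 - (if i ∈ S then g i else 0)
          ≤ (1/2) * (w i - z i)^2 + τ * |w i| := by
        intro i
        by_cases h : i ∈ S
        · rw [if_pos h]
          simpa [hg] using soft_opt (z i) τ (w i) hτ
        · rw [if_neg h, hwS i h]; simp
      calc (∑ i, (1/2) * (z i)^2) - ∑ i ∈ S, g i
          = ∑ i, ((1/2) * (z i)^2 - (if i ∈ S then g i else 0)) := by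
            rw [Finset.sum_sub_distrib]
            congr 1
            simp [Finset.sum_ite_mem]
        _ ≤ _ := Finset.sum_le_sum fun i _ => heach i
    have hsum : ∑ i ∈ S, g i ≤ ∑ i ∈ T, g i :=
      sum_topk T S g hgnn (by rw [hTcard]; exact hScard) hgmono
    rw [hstar]
    linarith
end

section
/- Let S ∈ ℝ^{d×K}, U ∈ ℝ^{m×K}, x ∈ ℝ^d, h ∈ ℝ^m, λ ≥ 0, f(g) = (1/2)‖x − Sg‖₂² + (1/2)‖h − Ug‖₂², E(g) = f(g) + λ‖g‖₁, and L = ‖SᵀS + UᵀU‖_op with L > 0. Let 0 < η ≤ 1/L, let g ∈ ℝ^K satisfy ‖g‖₀ ≤ k, and let g⁺ be obtained from g by the hard-k proximal-gradient step: g⁺ minimizes w ↦ (1/(2η))‖w − (g − η∇f(g))‖₂² + λ‖w‖₁ over {w : ‖w‖₀ ≤ k}. Then E(g⁺) ≤ E(g) − (1/(2η) − L/2)·‖g⁺ − g‖₂²; in particular E(g⁺) ≤ E(g), so the layer energy decreases monotonically along the hard-k iteration. -/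
open Matrix
open scoped Classical

/-! Since `f` is quadratic, `f(g⁺) = f(g) + ⟨∇f(g), g⁺ − g⟩ + ½‖S(g⁺ − g)‖² + ½‖U(g⁺ − g)‖²`
exactly, and the last two terms are at most `(L/2)‖g⁺ − g‖²`. The current iterate `g` is itself
`k`-sparse, so it competes in the hard-`k` prox problem; comparing its prox objective with that
of `g⁺` gives `‖g⁺ − g‖²/(2η) + ⟨∇f(g), g⁺ − g⟩ + λ‖g⁺‖₁ ≤ λ‖g‖₁`, and no convexity of the
constraint set is needed. Adding the two inequalities is the descent estimate, and `η ≤ 1/L`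
makes its coefficient nonnegative. -/

open Finset

section Quadratic

variable {ι : Type*} [Fintype ι]

lemma sum_sq_sub_sub_smul (η : ℝ) (G g w : ι → ℝ) :
    ∑ i, (w i - (g - η • G) i) ^ 2 =
      ∑ i, (w i - g i) ^ 2 + 2 * η * ∑ i, G i * (w i - g i) + η ^ 2 * ∑ i, G i ^ 2 := by
  simp only [Pi.sub_apply, Pi.smul_apply, smul_eq_mul, mul_sum, ← sum_add_distrib]
  exact sum_congr rfl fun i _ => by ring

lemma sum_sq_add_sum_mul_add_le_of_prox_le {η : ℝ} (hη : η ≠ 0) {G g w : ι → ℝ}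
    {R : (ι → ℝ) → ℝ}
    (hle : 1 / (2 * η) * ∑ i, (w i - (g - η • G) i) ^ 2 + R w ≤
      1 / (2 * η) * ∑ i, (g i - (g - η • G) i) ^ 2 + R g) :
    1 / (2 * η) * ∑ i, (w i - g i) ^ 2 + ∑ i, G i * (w i - g i) + R w ≤ R g := by
  have scaled : ∀ v : ι → ℝ, 1 / (2 * η) * ∑ i, (v i - (g - η • G) i) ^ 2 =
      1 / (2 * η) * ∑ i, (v i - g i) ^ 2 + ∑ i, G i * (v i - g i) + η / 2 * ∑ i, G i ^ 2 := by
    intro v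
    rw [sum_sq_sub_sub_smul]
    field_simp
  simp only [scaled, sub_self, mul_zero, sum_const_zero, zero_pow two_ne_zero] at hle
  linarith

end Quadratic

section MatrixQuadratic

variable {m n : Type*} [Fintype m] [Fintype n]

lemma sum_sq_sub_mulVec (M : Matrix m n ℝ) (y : m → ℝ) (g w : n → ℝ) :
    ∑ a, (y a - (M *ᵥ w) a) ^ 2 =
      ∑ a, (y a - (M *ᵥ g) a) ^ 2 + 2 * ∑ i, (Mᵀ *ᵥ (M *ᵥ g - y)) i * (w i - g i) +
        ∑ a, (M *ᵥ (w - g)) a ^ 2 := by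
  have hdual : ∑ i, (Mᵀ *ᵥ (M *ᵥ g - y)) i * (w i - g i) =
      ∑ a, ((M *ᵥ g) a - y a) * (M *ᵥ (w - g)) a := by
    simpa only [dotProduct, mulVec_transpose, Pi.sub_apply] using
      (dotProduct_mulVec (M *ᵥ g - y) M (w - g)).symm
  have hsplit : M *ᵥ w = M *ᵥ g + M *ᵥ (w - g) := by rw [← mulVec_add, add_sub_cancel]
  rw [hdual, hsplit, mul_sum, ← sum_add_distrib, ← sum_add_distrib]
  exact sum_congr rfl fun a _ => by simp only [Pi.add_apply]; ring

lemma dotProduct_transpose_mulVec_mulVec_self (M : Matrix m n ℝ) (v : n → ℝ) :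
    v ⬝ᵥ (Mᵀ *ᵥ (M *ᵥ v)) = ∑ a, (M *ᵥ v) a ^ 2 := by
  rw [dotProduct_mulVec v Mᵀ, vecMul_transpose]
  simp only [dotProduct, sq]

lemma sum_sq_mulVec_add_sum_sq_mulVec {p : Type*} [Fintype p] (S : Matrix m n ℝ)
    (U : Matrix p n ℝ) (v : n → ℝ) :
    ∑ a, (S *ᵥ v) a ^ 2 + ∑ b, (U *ᵥ v) b ^ 2 = v ⬝ᵥ ((Sᵀ * S + Uᵀ * U) *ᵥ v) := by
  rw [add_mulVec, ← mulVec_mulVec, ← mulVec_mulVec, dotProduct_add,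
    dotProduct_transpose_mulVec_mulVec_self, dotProduct_transpose_mulVec_mulVec_self]

end MatrixQuadratic

lemma smoothPart_eq_add_sum_gradSmooth_mul {d m K : ℕ} (S : Matrix (Fin d) (Fin K) ℝ)
    (U : Matrix (Fin m) (Fin K) ℝ) (x : Fin d → ℝ) (h : Fin m → ℝ) (g w : Fin K → ℝ) :
    smoothPart S U x h w =
      smoothPart S U x h g + ∑ i, gradSmooth S U x h g i * (w i - g i) +
        1 / 2 * (∑ a, (S *ᵥ (w - g)) a ^ 2 + ∑ b, (U *ᵥ (w - g)) b ^ 2) := by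
  simp only [smoothPart, sum_sq_sub_mulVec S x g w, sum_sq_sub_mulVec U h g w, gradSmooth,
    Pi.add_apply, add_mul, sum_add_distrib]
  ring

lemma dotProduct_mulVec_le_l2OpNorm_mul {K : ℕ} (M : Matrix (Fin K) (Fin K) ℝ)
    (v : Fin K → ℝ) : v ⬝ᵥ (M *ᵥ v) ≤ l2OpNorm M * (v ⬝ᵥ v) := by
  set T := LinearMap.toContinuousLinearMap (Matrix.toEuclideanLin M)
  set u : EuclideanSpace ℝ (Fin K) := WithLp.toLp 2 v
  calc v ⬝ᵥ (M *ᵥ v) = inner ℝ u (T u) := by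
        simp [u, T, EuclideanSpace.inner_toLp_toLp, dotProduct_comm]
    _ ≤ ‖u‖ * ‖T u‖ := real_inner_le_norm _ _
    _ ≤ ‖u‖ * (‖T‖ * ‖u‖) := by gcongr; exact T.le_opNorm u
    _ = l2OpNorm M * (v ⬝ᵥ v) := by
        rw [l2OpNorm, mul_left_comm, ← real_inner_self_eq_norm_mul_norm]
        rfl

lemma smoothPart_le_add_sum_gradSmooth_mul {d m K : ℕ} (S : Matrix (Fin d) (Fin K) ℝ)
    (U : Matrix (Fin m) (Fin K) ℝ) (x : Fin d → ℝ) (h : Fin m → ℝ) (g w : Fin K → ℝ) :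
    smoothPart S U x h w ≤
      smoothPart S U x h g + ∑ i, gradSmooth S U x h g i * (w i - g i) +
        l2OpNorm (Sᵀ * S + Uᵀ * U) / 2 * ∑ i, (w i - g i) ^ 2 := by
  have hquad := dotProduct_mulVec_le_l2OpNorm_mul (Sᵀ * S + Uᵀ * U) (w - g)
  rw [← sum_sq_mulVec_add_sum_sq_mulVec] at hquad
  simp only [dotProduct, Pi.sub_apply, ← sq] at hquad
  rw [smoothPart_eq_add_sum_gradSmooth_mul S U x h g w]
  linarith

theorem hardk_energy_descent_general {d m K : ℕ}
    (S : Matrix (Fin d) (Fin K) ℝ) (U : Matrix (Fin m) (Fin K) ℝ)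
    (x : Fin d → ℝ) (h : Fin m → ℝ) (lam : ℝ)
    (L : ℝ) (hLdef : L = l2OpNorm (Sᵀ * S + Uᵀ * U)) (hL : 0 < L)
    (η : ℝ) (hη0 : 0 < η) (hη : η ≤ 1 / L)
    (k : ℕ) (g : Fin K → ℝ) (hg : l0norm g ≤ k)
    (gplus : Fin K → ℝ)
    (hplus_min : ∀ w : Fin K → ℝ, l0norm w ≤ k →
      (1 / (2 * η)) * (∑ i, (gplus i - (g - η • gradSmooth S U x h g) i) ^ 2) +
          lam * ∑ i, |gplus i| ≤
        (1 / (2 * η)) * (∑ i, (w i - (g - η • gradSmooth S U x h g) i) ^ 2) +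
          lam * ∑ i, |w i|) :
    energy S U x h lam gplus ≤
        energy S U x h lam g - (1 / (2 * η) - L / 2) * ∑ i, (gplus i - g i) ^ 2 ∧
      energy S U x h lam gplus ≤ energy S U x h lam g := by
  have hprox := sum_sq_add_sum_mul_add_le_of_prox_le (R := fun w => lam * ∑ i, |w i|)
    hη0.ne' (hplus_min g hg)
  have hsmooth := smoothPart_le_add_sum_gradSmooth_mul S U x h g gplus
  rw [← hLdef] at hsmooth
  have hdescent : energy S U x h lam gplus ≤
      energy S U x h lam g - (1 / (2 * η) - L / 2) * ∑ i, (gplus i - g i) ^ 2 := by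
    simp only [energy] at hprox ⊢
    linarith
  have hstep : 0 ≤ 1 / (2 * η) - L / 2 := by
    have hLη : L ≤ 1 / η := (le_one_div hL hη0).mpr hη
    rw [show 1 / (2 * η) - L / 2 = (1 / η - L) / 2 by ring]
    exact div_nonneg (sub_nonneg.mpr hLη) zero_le_two
  refine ⟨hdescent, hdescent.trans (sub_le_self _ ?_)⟩
  exact mul_nonneg hstep (sum_nonneg fun i _ => sq_nonneg _)

/-- Energy descent of the hard-`k` proximal-gradient step: if `g⁺` minimizes
`w ↦ (1/(2η))‖w − (g − η∇f(g))‖₂² + λ‖w‖₁` over the `k`-sparse vectors, then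
`E(g⁺) ≤ E(g) − (1/(2η) − L/2)‖g⁺ − g‖₂²`; in particular `E(g⁺) ≤ E(g)`. -/
theorem hardk_energy_descent {d m K : ℕ}
    (S : Matrix (Fin d) (Fin K) ℝ) (U : Matrix (Fin m) (Fin K) ℝ)
    (x : Fin d → ℝ) (h : Fin m → ℝ) (lam : ℝ) (hlam : 0 ≤ lam)
    (L : ℝ) (hLdef : L = l2OpNorm (Sᵀ * S + Uᵀ * U)) (hL : 0 < L)
    (η : ℝ) (hη0 : 0 < η) (hη : η ≤ 1 / L)
    (k : ℕ) (g : Fin K → ℝ) (hg : l0norm g ≤ k)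
    (gplus : Fin K → ℝ) (hplus_sparse : l0norm gplus ≤ k)
    (hplus_min : ∀ w : Fin K → ℝ, l0norm w ≤ k →
      (1 / (2 * η)) * (∑ i, (gplus i - (g - η • gradSmooth S U x h g) i) ^ 2) +
          lam * ∑ i, |gplus i| ≤
        (1 / (2 * η)) * (∑ i, (w i - (g - η • gradSmooth S U x h g) i) ^ 2) +
          lam * ∑ i, |w i|) :
    energy S U x h lam gplus ≤
        energy S U x h lam g - (1 / (2 * η) - L / 2) * ∑ i, (gplus i - g i) ^ 2 ∧
      energy S U x h lam gplus ≤ energy S U x h lam g :=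
  hardk_energy_descent_general S U x h lam L hLdef hL η hη0 hη k g hg gplus hplus_min
end

section
/- Let S ∈ ℝ^{D×K}, x_obs ∈ ℝ^D, λ ≥ 0, and let m ∈ {0,1}^D be a binary mask. Suppose z ∈ ℝ^K is a global minimizer over g ∈ ℝ^K of the completed-signal objective g ↦ (1/2)‖x̂ − Sg‖₂² + λ‖g‖₁, where x̂ = m ⊙ x_obs + (1 − m) ⊙ (Sz) is the signal whose observed coordinates are taken from x_obs and whose hidden coordinates are filled in by the reconstruction Sz itself. Then z is a global minimizer over g ∈ ℝ^K of the masked objective g ↦ (1/2)‖m ⊙ (x_obs − Sg)‖₂² + λ‖g‖₁. That is, any fixed point of the masked-FISTA outer imputation loop solves the masked sparse-imputation problem. -/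
open Matrix

/-- Fixed points of the masked-FISTA outer imputation loop solve the masked
sparse-imputation problem: if `z` globally minimizes the completed-signal objective
`g ↦ ½‖x̂ − Sg‖₂² + λ‖g‖₁`, where `x̂ = m ⊙ x_obs + (1 − m) ⊙ (Sz)`, then `z`
globally minimizes the masked objective `g ↦ ½‖m ⊙ (x_obs − Sg)‖₂² + λ‖g‖₁`. -/
theorem masked_fista_fixed_point {D K : ℕ}
    (S : Matrix (Fin D) (Fin K) ℝ) (xobs : Fin D → ℝ) (lam : ℝ) (hlam : 0 ≤ lam)
    (mask : Fin D → ℝ) (hmask : ∀ i, mask i = 0 ∨ mask i = 1)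
    (z : Fin K → ℝ) (xhat : Fin D → ℝ)
    (hxhat : ∀ i, xhat i = mask i * xobs i + (1 - mask i) * S.mulVec z i)
    (hz : ∀ g : Fin K → ℝ,
      (1 / 2) * (∑ i, (xhat i - S.mulVec z i) ^ 2) + lam * ∑ j, |z j| ≤
        (1 / 2) * (∑ i, (xhat i - S.mulVec g i) ^ 2) + lam * ∑ j, |g j|) :
    ∀ g : Fin K → ℝ,
      (1 / 2) * (∑ i, (mask i * (xobs i - S.mulVec z i)) ^ 2) + lam * ∑ j, |z j| ≤
        (1 / 2) * (∑ i, (mask i * (xobs i - S.mulVec g i)) ^ 2) + lam * ∑ j, |g j| := by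
  intro g
  -- abbreviations
  set A : ℝ := ∑ i, (mask i * (xobs i - S.mulVec z i)) ^ 2 with hA
  set B : ℝ := ∑ i, (mask i * (xobs i - S.mulVec g i)) ^ 2 with hB
  set E : ℝ := ∑ i, ((1 - mask i) * (S.mulVec z i - S.mulVec g i)) ^ 2 with hE
  have hEnn : 0 ≤ E := Finset.sum_nonneg fun i _ => sq_nonneg _
  have hzeq : ∀ i, xhat i - S.mulVec z i = mask i * (xobs i - S.mulVec z i) := by
    intro i; rw [hxhat i]; ring
  -- key inequality for every t ∈ (0,1]
  have key : ∀ t : ℝ, 0 < t → t ≤ 1 →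
      (1 / 2) * A + lam * ∑ j, |z j| ≤ (1 / 2) * B + lam * (∑ j, |g j|) + (t / 2) * E := by
    intro t ht ht1
    have h1t : 0 ≤ 1 - t := by linarith
    set gt : Fin K → ℝ := (1 - t) • z + t • g with hgt
    have hmv : ∀ i, S.mulVec gt i = (1 - t) * S.mulVec z i + t * S.mulVec g i := by
      intro i
      rw [hgt, mulVec_add, mulVec_smul, mulVec_smul]
      simp [smul_eq_mul]
    -- termwise quadratic bound
    have hquad : ∀ i, (xhat i - S.mulVec gt i) ^ 2 ≤
        (1 - t) * (mask i * (xobs i - S.mulVec z i)) ^ 2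
          + t * (mask i * (xobs i - S.mulVec g i)) ^ 2
          + t ^ 2 * ((1 - mask i) * (S.mulVec z i - S.mulVec g i)) ^ 2 := by
      intro i
      rw [hxhat i, hmv i]
      rcases hmask i with h | h <;> rw [h]
      · ring_nf; nlinarith [sq_nonneg (S.mulVec z i - S.mulVec g i)]
      · ring_nf
        nlinarith [mul_nonneg (mul_nonneg ht.le h1t)
          (sq_nonneg (S.mulVec z i - S.mulVec g i)), sq_nonneg (S.mulVec z i - S.mulVec g i)]
    have hquadsum : (∑ i, (xhat i - S.mulVec gt i) ^ 2) ≤ (1 - t) * A + t * B + t ^ 2 * E := by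
      calc (∑ i, (xhat i - S.mulVec gt i) ^ 2)
          ≤ ∑ i, ((1 - t) * (mask i * (xobs i - S.mulVec z i)) ^ 2
              + t * (mask i * (xobs i - S.mulVec g i)) ^ 2
              + t ^ 2 * ((1 - mask i) * (S.mulVec z i - S.mulVec g i)) ^ 2) :=
            Finset.sum_le_sum fun i _ => hquad i
        _ = (1 - t) * A + t * B + t ^ 2 * E := by
            rw [hA, hB, hE]
            simp [Finset.sum_add_distrib, Finset.mul_sum]
    -- penalty bound
    have habs : (∑ j, |gt j|) ≤ (1 - t) * (∑ j, |z j|) + t * (∑ j, |g j|) := by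
      calc (∑ j, |gt j|) ≤ ∑ j, ((1 - t) * |z j| + t * |g j|) := by
            refine Finset.sum_le_sum fun j _ => ?_
            have : gt j = (1 - t) * z j + t * g j := by simp [hgt, smul_eq_mul]
            rw [this]
            calc |(1 - t) * z j + t * g j| ≤ |(1 - t) * z j| + |t * g j| := abs_add_le _ _
              _ = (1 - t) * |z j| + t * |g j| := by
                  rw [abs_mul, abs_mul, abs_of_nonneg h1t, abs_of_nonneg ht.le]
        _ = (1 - t) * (∑ j, |z j|) + t * (∑ j, |g j|) := by
            simp [Finset.sum_add_distrib, Finset.mul_sum]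
    have hmin := hz gt
    have hLHS : (∑ i, (xhat i - S.mulVec z i) ^ 2) = A := by
      rw [hA]; exact Finset.sum_congr rfl fun i _ => by rw [hzeq i]
    rw [hLHS] at hmin
    have hpen : lam * (∑ j, |gt j|) ≤ lam * ((1 - t) * (∑ j, |z j|) + t * (∑ j, |g j|)) :=
      mul_le_mul_of_nonneg_left habs hlam
    -- combine: f(z) ≤ (1-t) f(z) + t f(g) + (t²/2) E, then divide by t
    have hcomb : (1 / 2) * A + lam * ∑ j, |z j| ≤
        (1 - t) * ((1 / 2) * A + lam * ∑ j, |z j|)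
          + t * ((1 / 2) * B + lam * ∑ j, |g j|) + (t ^ 2 / 2) * E := by
      nlinarith [hmin, hquadsum, hpen]
    have htE : (t ^ 2 / 2) * E ≤ t * ((t / 2) * E) := by nlinarith
    nlinarith [hcomb, htE, ht]
  -- let t → 0
  by_contra hcon
  push_neg at hcon
  set δ : ℝ := ((1 / 2) * A + lam * ∑ j, |z j|) - ((1 / 2) * B + lam * ∑ j, |g j|) with hδ
  have hδpos : 0 < δ := by simp only [hδ]; linarith
  have ht0 : 0 < δ / (E + 1) := div_pos hδpos (by linarith)
  set t : ℝ := min 1 (δ / (E + 1)) with htdef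
  have htpos : 0 < t := lt_min one_pos ht0
  have ht1 : t ≤ 1 := min_le_left _ _
  have h3 : t ≤ δ / (E + 1) := min_le_right _ _
  clear_value t
  clear_value δ
  have h2 := key t htpos ht1
  have htE : (t / 2) * E < δ := by
    have h4 : t * (E + 1) ≤ δ := by
      rw [← le_div_iff₀ (by linarith : (0:ℝ) < E + 1)]; exact h3
    have h5 : t / 2 * E ≤ t * E := by nlinarith [mul_nonneg htpos.le hEnn]
    have h6 : t * E + t ≤ δ := by linear_combination h4
    linarith
  simp only [hδ] at htE
  linarith
end
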